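/- arXiv:1512.06796 — 3 statements merged into one kernel-verified Lean document; each statement's English description precedes it below -/
import Mathlib

section
/- A univariate polynomial p with real coefficients is nonnegative on all of ℝ if and only if p can be written as a sum of squares of real polynomials (in fact, of two squares). -/
/-!
Induct on the degree. A nonnegative polynomial of positive degree has a factor of positive degree
that is a sum of two squares: `(X - a) ^ 2` if it has a real root `a` (a minimum, hence a double
root), and otherwise a monic irreducible factor, which is a quadratic without real roots and so
completes to `(X + b / 2) ^ 2 + m` with `m > 0`. The cofactor is again nonnegative, and by the
Brahmagupta–Fibonacci identity sums of two squares are closed under multiplication.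
-/

open Polynomial

def IsSumTwoSq {R : Type*} [Semiring R] (a : R) : Prop :=
  ∃ x y : R, a = x ^ 2 + y ^ 2

theorem IsSumTwoSq.mul {R : Type*} [CommRing R] {a b : R} (ha : IsSumTwoSq a)
    (hb : IsSumTwoSq b) : IsSumTwoSq (a * b) := by
  obtain ⟨x₁, x₂, rfl⟩ := ha
  obtain ⟨y₁, y₂, rfl⟩ := hb
  exact ⟨_, _, sq_add_sq_mul_sq_add_sq⟩

theorem IsSumTwoSq.eval_nonneg {p : ℝ[X]} (hp : IsSumTwoSq p) (x : ℝ) : 0 ≤ p.eval x := by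
  obtain ⟨q₁, q₂, rfl⟩ := hp
  simp only [eval_add, eval_pow]
  positivity

namespace Polynomial

theorem eval_nonneg_of_eval_mul_nonneg {f r : ℝ[X]} (hf₀ : f ≠ 0) (hf : ∀ x, 0 ≤ f.eval x)
    (hfr : ∀ x, 0 ≤ (f * r).eval x) (x : ℝ) : 0 ≤ r.eval x := by
  have hsub : (f.roots.toFinset : Set ℝ)ᶜ ⊆ {y | 0 ≤ r.eval y} := fun y hy => by
    have hfy : 0 < f.eval y :=
      (hf y).lt_of_ne' (by simpa [Multiset.mem_toFinset, mem_roots hf₀] using hy)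
    exact nonneg_of_mul_nonneg_right (by simpa using hfr y) hfy
  have hdense : Dense (f.roots.toFinset : Set ℝ)ᶜ := (Finset.countable_toSet _).dense_compl ℝ
  exact closure_minimal hsub (isClosed_le continuous_const r.continuous)
    (hdense.closure_eq ▸ Set.mem_univ x)

theorem sq_X_sub_C_dvd_of_isRoot_of_eval_nonneg {p : ℝ[X]} (hp : ∀ x, 0 ≤ p.eval x) {a : ℝ}
    (ha : p.IsRoot a) : (X - C a) ^ 2 ∣ p := by
  rcases eq_or_ne p 0 with rfl | hp₀
  · exact dvd_zero _
  have hmin : IsLocalMin (fun x => p.eval x) a :=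
    Filter.Eventually.of_forall fun x => by simpa [ha.eq_zero] using hp x
  have hderiv : (derivative p).IsRoot a := by
    rw [IsRoot, ← Polynomial.deriv]
    exact hmin.deriv_eq_zero
  exact (le_rootMultiplicity_iff hp₀).mp
    ((one_lt_rootMultiplicity_iff_isRoot hp₀).mpr ⟨ha, hderiv⟩)

theorem Monic.isSumTwoSq_of_natDegree_eq_two_of_forall_not_isRoot {g : ℝ[X]} (hm : g.Monic)
    (hdeg : g.natDegree = 2) (hroot : ∀ x, ¬ g.IsRoot x) : IsSumTwoSq g := by
  set b := g.coeff 1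
  set c := g.coeff 0
  have hg : g = X ^ 2 + C b * X + C c := by
    have hlead : g.coeff 2 = 1 := hdeg ▸ hm.leadingCoeff
    simpa [hlead] using eq_quadratic_of_degree_le_two (natDegree_le_iff_degree_le.mp hdeg.le)
  have heval : ∀ x, g.eval x = (x + b / 2) ^ 2 + (c - b ^ 2 / 4) := fun x => by
    rw [hg]
    simp only [eval_add, eval_pow, eval_mul, eval_X, eval_C]
    ring
  have hpos : 0 < c - b ^ 2 / 4 := by
    by_contra! h
    apply hroot (-b / 2 + √(-(c - b ^ 2 / 4)))
    rw [IsRoot, heval, add_right_comm, neg_div, neg_add_cancel, zero_add,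
      Real.sq_sqrt (neg_nonneg.mpr h), neg_add_cancel]
  refine ⟨X + C (b / 2), C √(c - b ^ 2 / 4), funext fun x => ?_⟩
  simp only [heval, eval_add, eval_pow, eval_X, eval_C, Real.sq_sqrt hpos.le]

theorem exists_isSumTwoSq_dvd_of_eval_nonneg {p : ℝ[X]} (hp : ∀ x, 0 ≤ p.eval x)
    (hdeg : 0 < p.natDegree) : ∃ f, IsSumTwoSq f ∧ 0 < f.natDegree ∧ f ∣ p := by
  obtain ⟨a, ha⟩ | hroot := em (∃ a, p.IsRoot a)
  · exact ⟨(X - C a) ^ 2, ⟨X - C a, 0, by ring⟩, by simp,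
      sq_X_sub_C_dvd_of_isRoot_of_eval_nonneg hp ha⟩
  obtain ⟨g, hm, hirr, hgp⟩ :=
    exists_monic_irreducible_factor p (not_isUnit_of_natDegree_pos p hdeg)
  have hgroot : ∀ x, ¬ g.IsRoot x := fun x hx => hroot ⟨x, hx.dvd hgp⟩
  have hdeg_ne_one : g.natDegree ≠ 1 := fun h => by
    obtain ⟨x, hx⟩ :=
      exists_root_of_degree_eq_one ((degree_eq_iff_natDegree_eq_of_pos one_pos).mpr h)
    exact hgroot x hx
  have hdeg_two : g.natDegree = 2 := by
    have := hirr.natDegree_le_two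
    have := hirr.natDegree_pos
    omega
  exact ⟨g, hm.isSumTwoSq_of_natDegree_eq_two_of_forall_not_isRoot hdeg_two hgroot, by omega,
    hgp⟩

theorem isSumTwoSq_of_eval_nonneg {p : ℝ[X]} (hp : ∀ x, 0 ≤ p.eval x) : IsSumTwoSq p := by
  induction hn : p.natDegree using Nat.strong_induction_on generalizing p with
  | _ n ih =>
    rcases Nat.eq_zero_or_pos n with rfl | hn_pos
    · obtain ⟨c, rfl⟩ := natDegree_eq_zero.mp hn
      have hc : 0 ≤ c := by simpa using hp 0
      exact ⟨C √c, 0, by rw [← C_pow, Real.sq_sqrt hc]; ring⟩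
    obtain ⟨f, hf, hf_deg, r, rfl⟩ := exists_isSumTwoSq_dvd_of_eval_nonneg hp (hn ▸ hn_pos)
    have hfr₀ : f * r ≠ 0 := ne_zero_of_natDegree_gt (hn ▸ hn_pos)
    have hr := eval_nonneg_of_eval_mul_nonneg (left_ne_zero_of_mul hfr₀) hf.eval_nonneg hp
    have hr_deg : r.natDegree < n := by
      rw [← hn, natDegree_mul (left_ne_zero_of_mul hfr₀) (right_ne_zero_of_mul hfr₀)]
      omega
    exact hf.mul (ih _ hr_deg hr rfl)

end Polynomial

theorem nonneg_iff_sum_two_squares (p : ℝ[X]) :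
    (∀ x : ℝ, 0 ≤ p.eval x) ↔ ∃ q₁ q₂ : ℝ[X], p = q₁ ^ 2 + q₂ ^ 2 :=
  ⟨isSumTwoSq_of_eval_nonneg, IsSumTwoSq.eval_nonneg⟩
end

section
/- A real polynomial p of odd degree at most 2k−1 is nonnegative on the interval [−1,1] if and only if there exist sums of squares q and r of polynomials of degree at most k−1 such that p(t) = (1+t)·q(t) + (1−t)·r(t). -/
/-!
A polynomial that is nonnegative on `[-1, 1]` is a product of a nonnegative constant, linear
factors `ℓ` with `ℓ(±1) ≥ 0`, squares `(X - a)²` of interior roots (an interior root is a local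
minimum, hence a double root) and quadratics `(X - a)² + b²`. Multiplying by such a factor of
degree `e` maps the degree-`d` truncation of the preordering generated by `1 + X` and `1 - X` into
the degree-`(d + e)` truncation, so by induction on the degree `p` lies in the truncation of level
`deg p ≤ 2k - 1`. In odd degree the terms `σ₀` and `(1 - X²) σ₃` are absorbed into the other two,
because `2 = (1 + X) + (1 - X)` and `2 (1 - X²) = (1 + X) (1 - X)² + (1 - X) (1 + X)²`.
-/

open Polynomial

/-- `q` is a sum of squares of polynomials of degree at most `d`. -/
def IsSOSOfDegLE (d : ℕ) (q : ℝ[X]) : Prop :=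
  ∃ (m : ℕ) (s : Fin m → ℝ[X]), (∀ i, (s i).natDegree ≤ d) ∧ q = ∑ i, (s i) ^ 2

open Set

theorem IsSOSOfDegLE.eval_nonneg {d : ℕ} {q : ℝ[X]} (hq : IsSOSOfDegLE d q) (t : ℝ) :
    0 ≤ q.eval t := by
  obtain ⟨m, s, -, rfl⟩ := hq
  rw [eval_finsetSum]
  exact Finset.sum_nonneg fun i _ => by rw [eval_pow]; exact sq_nonneg _

theorem natDegree_one_add_X_le : (1 + X : ℝ[X]).natDegree ≤ 1 := by
  simpa using natDegree_add_le (1 : ℝ[X]) X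

theorem natDegree_one_sub_X_le : (1 - X : ℝ[X]).natDegree ≤ 1 := by
  simpa using natDegree_sub_le (1 : ℝ[X]) X

/-- The strict degree bound makes `n = 0` force `σ = 0`. -/
def IsSOSOfDegLT (n : ℕ) (σ : ℝ[X]) : Prop :=
  ∃ (m : ℕ) (s : Fin m → ℝ[X]), (∀ i, (s i).natDegree < n) ∧ σ = ∑ i, s i ^ 2

namespace IsSOSOfDegLT

variable {n n' e : ℕ} {σ τ : ℝ[X]}

theorem zero (n : ℕ) : IsSOSOfDegLT n 0 := ⟨0, ![], nofun, by simp⟩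

theorem sq {g : ℝ[X]} (hg : g.natDegree < n) : IsSOSOfDegLT n (g ^ 2) :=
  ⟨1, fun _ => g, fun _ => hg, by simp⟩

theorem mono (hσ : IsSOSOfDegLT n σ) (hn : n ≤ n') : IsSOSOfDegLT n' σ := by
  obtain ⟨m, s, hs, rfl⟩ := hσ
  exact ⟨m, s, fun i => (hs i).trans_le hn, rfl⟩

theorem add (hσ : IsSOSOfDegLT n σ) (hτ : IsSOSOfDegLT n τ) : IsSOSOfDegLT n (σ + τ) := by
  obtain ⟨m₁, s₁, hs₁, rfl⟩ := hσ
  obtain ⟨m₂, s₂, hs₂, rfl⟩ := hτ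
  refine ⟨m₁ + m₂, Fin.append s₁ s₂, Fin.addCases (by simpa using hs₁) (by simpa using hs₂), ?_⟩
  simp [Fin.sum_univ_add]

theorem sq_mul (hσ : IsSOSOfDegLT n σ) {g : ℝ[X]} (hg : g.natDegree ≤ e) :
    IsSOSOfDegLT (n + e) (g ^ 2 * σ) := by
  obtain ⟨m, s, hs, rfl⟩ := hσ
  refine ⟨m, fun i => g * s i, fun i => ?_, by simp [Finset.mul_sum, mul_pow]⟩
  show (g * s i).natDegree < n + e
  have := hs i
  have := natDegree_mul_le (p := g) (q := s i)
  omega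

theorem C_mul (hσ : IsSOSOfDegLT n σ) {c : ℝ} (hc : 0 ≤ c) : IsSOSOfDegLT n (C c * σ) := by
  have h := hσ.sq_mul (g := C √c) (e := 0) (by simp)
  rwa [← C_pow, Real.sq_sqrt hc, add_zero] at h

theorem isSOSOfDegLE (hσ : IsSOSOfDegLT (n + 1) σ) : IsSOSOfDegLE n σ := by
  obtain ⟨m, s, hs, rfl⟩ := hσ
  exact ⟨m, s, fun i => Nat.lt_succ_iff.1 (hs i), rfl⟩

end IsSOSOfDegLT

/-- Degree-`d` truncation of the preordering generated by `1 + X` and `1 - X`: the bounds on the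
`σᵢ` say exactly that every term of the representation has degree at most `d`. -/
def truncPreordering (d : ℕ) : Set ℝ[X] :=
  {p | ∃ σ₀ σ₁ σ₂ σ₃ : ℝ[X], IsSOSOfDegLT (d / 2 + 1) σ₀ ∧ IsSOSOfDegLT ((d + 1) / 2) σ₁ ∧
    IsSOSOfDegLT ((d + 1) / 2) σ₂ ∧ IsSOSOfDegLT (d / 2) σ₃ ∧
    p = σ₀ + (1 + X) * σ₁ + (1 - X) * σ₂ + (1 - X ^ 2) * σ₃}

namespace truncPreordering

variable {d d' : ℕ} {p q : ℝ[X]}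

theorem C_mem {c : ℝ} (hc : 0 ≤ c) : C c ∈ truncPreordering 0 :=
  ⟨C √c ^ 2, 0, 0, 0, .sq (by simp), .zero _, .zero _, .zero _, by
    rw [← C_pow, Real.sq_sqrt hc]; ring⟩

theorem mono (hp : p ∈ truncPreordering d) (hd : d ≤ d') : p ∈ truncPreordering d' := by
  obtain ⟨σ₀, σ₁, σ₂, σ₃, h₀, h₁, h₂, h₃, rfl⟩ := hp
  exact ⟨σ₀, σ₁, σ₂, σ₃, h₀.mono (by omega), h₁.mono (by omega), h₂.mono (by omega),
    h₃.mono (by omega), rfl⟩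

theorem add_mem (hp : p ∈ truncPreordering d) (hq : q ∈ truncPreordering d) :
    p + q ∈ truncPreordering d := by
  obtain ⟨σ₀, σ₁, σ₂, σ₃, h₀, h₁, h₂, h₃, rfl⟩ := hp
  obtain ⟨τ₀, τ₁, τ₂, τ₃, k₀, k₁, k₂, k₃, rfl⟩ := hq
  exact ⟨σ₀ + τ₀, σ₁ + τ₁, σ₂ + τ₂, σ₃ + τ₃, h₀.add k₀, h₁.add k₁, h₂.add k₂, h₃.add k₃, by ring⟩

theorem sq_mul_mem {g : ℝ[X]} {e : ℕ} (hg : g.natDegree ≤ e) (hp : p ∈ truncPreordering d) :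
    g ^ 2 * p ∈ truncPreordering (d + 2 * e) := by
  obtain ⟨σ₀, σ₁, σ₂, σ₃, h₀, h₁, h₂, h₃, rfl⟩ := hp
  exact ⟨g ^ 2 * σ₀, g ^ 2 * σ₁, g ^ 2 * σ₂, g ^ 2 * σ₃, (h₀.sq_mul hg).mono (by omega),
    (h₁.sq_mul hg).mono (by omega), (h₂.sq_mul hg).mono (by omega),
    (h₃.sq_mul hg).mono (by omega), by ring⟩

theorem C_mul_mem {c : ℝ} (hc : 0 ≤ c) (hp : p ∈ truncPreordering d) :
    C c * p ∈ truncPreordering d := by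
  have h := sq_mul_mem (g := C √c) (e := 0) (by simp) hp
  rwa [← C_pow, Real.sq_sqrt hc, mul_zero, add_zero] at h

theorem one_add_X_mul_mem (hp : p ∈ truncPreordering d) :
    (1 + X) * p ∈ truncPreordering (d + 1) := by
  obtain ⟨σ₀, σ₁, σ₂, σ₃, h₀, h₁, h₂, h₃, rfl⟩ := hp
  exact ⟨(1 + X) ^ 2 * σ₁, σ₀, (1 + X) ^ 2 * σ₃, σ₂,
    (h₁.sq_mul natDegree_one_add_X_le).mono (by omega), h₀.mono (by omega),
    (h₃.sq_mul natDegree_one_add_X_le).mono (by omega), h₂.mono (by omega), by ring⟩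

theorem one_sub_X_mul_mem (hp : p ∈ truncPreordering d) :
    (1 - X) * p ∈ truncPreordering (d + 1) := by
  obtain ⟨σ₀, σ₁, σ₂, σ₃, h₀, h₁, h₂, h₃, rfl⟩ := hp
  exact ⟨(1 - X) ^ 2 * σ₂, (1 - X) ^ 2 * σ₃, σ₀, σ₁,
    (h₂.sq_mul natDegree_one_sub_X_le).mono (by omega),
    (h₃.sq_mul natDegree_one_sub_X_le).mono (by omega), h₀.mono (by omega),
    h₁.mono (by omega), by ring⟩

/-- Lagrange interpolation at `±1`. -/
theorem eq_of_natDegree_le_one {ℓ : ℝ[X]} (hℓ : ℓ.natDegree ≤ 1) :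
    ℓ = C (ℓ.eval 1 / 2) * (1 + X) + C (ℓ.eval (-1) / 2) * (1 - X) := by
  rw [eq_X_add_C_of_natDegree_le_one hℓ]
  refine Polynomial.funext fun t => ?_
  simp only [eval_add, eval_sub, eval_mul, eval_C, eval_X, eval_one]
  ring

theorem linear_mul_mem {ℓ : ℝ[X]} (hℓ : ℓ.natDegree ≤ 1) (hℓ_neg : 0 ≤ ℓ.eval (-1))
    (hℓ_pos : 0 ≤ ℓ.eval 1) (hp : p ∈ truncPreordering d) : ℓ * p ∈ truncPreordering (d + 1) := by
  rw [eq_of_natDegree_le_one hℓ, add_mul, mul_assoc, mul_assoc]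
  exact add_mem (C_mul_mem (by linarith) (one_add_X_mul_mem hp))
    (C_mul_mem (by linarith) (one_sub_X_mul_mem hp))

theorem X_sub_C_sq_add_C_mul_mem {a b : ℝ} (hb : 0 ≤ b) (hp : p ∈ truncPreordering d) :
    ((X - C a) ^ 2 + C b) * p ∈ truncPreordering (d + 2) := by
  rw [add_mul]
  exact add_mem (sq_mul_mem (natDegree_X_sub_C a).le hp)
    (C_mul_mem hb (mono hp (by omega)))

theorem exists_eq_of_mem_odd {k : ℕ} (hp : p ∈ truncPreordering (2 * k + 1)) :
    ∃ q r : ℝ[X], IsSOSOfDegLE k q ∧ IsSOSOfDegLE k r ∧ p = (1 + X) * q + (1 - X) * r := by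
  obtain ⟨σ₀, σ₁, σ₂, σ₃, h₀, h₁, h₂, h₃, rfl⟩ := hp
  have h₀' : IsSOSOfDegLT (k + 1) (C (1 / 2) * σ₀) := (h₀.C_mul (by norm_num)).mono (by omega)
  refine ⟨σ₁ + C (1 / 2) * σ₀ + C (1 / 2) * ((1 - X) ^ 2 * σ₃),
    σ₂ + C (1 / 2) * σ₀ + C (1 / 2) * ((1 + X) ^ 2 * σ₃), ?_, ?_, ?_⟩
  · exact ((h₁.mono (by omega)).add h₀' |>.add
      (((h₃.sq_mul natDegree_one_sub_X_le).C_mul (by norm_num)).mono (by omega))).isSOSOfDegLE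
  · exact ((h₂.mono (by omega)).add h₀' |>.add
      (((h₃.sq_mul natDegree_one_add_X_le).C_mul (by norm_num)).mono (by omega))).isSOSOfDegLE
  · have : (C (1 / 2) : ℝ[X]) * 2 = 1 := by rw [← C_ofNat, ← C_mul]; norm_num
    linear_combination -(σ₀ + (1 - X ^ 2) * σ₃) * this

end truncPreordering

theorem forall_mem_Icc_nonneg_of_ne {f : ℝ → ℝ} (hf : Continuous f) {a b c : ℝ} (hbc : b < c)
    (h : ∀ t ∈ Icc b c, t ≠ a → 0 ≤ f t) : ∀ t ∈ Icc b c, 0 ≤ f t := by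
  have hclosed : IsClosed {t | 0 ≤ f t} := isClosed_le continuous_const hf
  have hsub : Ioo b c ∩ {a}ᶜ ⊆ {t | 0 ≤ f t} := fun t ht => h t (Ioo_subset_Icc_self ht.1) ht.2
  have hIoo : Ioo b c ⊆ {t | 0 ≤ f t} :=
    ((dense_compl_singleton a).open_subset_closure_inter isOpen_Ioo).trans
      (closure_minimal hsub hclosed)
  rw [← closure_Ioo hbc.ne]
  exact closure_minimal hIoo hclosed

theorem eval_nonneg_of_mul {f u : ℝ[X]} {a b c : ℝ} (hbc : b < c)
    (hfu : ∀ t ∈ Icc b c, 0 ≤ (f * u).eval t) (hf : ∀ t ∈ Icc b c, t ≠ a → 0 < f.eval t) :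
    ∀ t ∈ Icc b c, 0 ≤ u.eval t :=
  forall_mem_Icc_nonneg_of_ne u.continuous hbc fun t ht hta =>
    nonneg_of_mul_nonneg_right (by simpa using hfu t ht) (hf t ht hta)

theorem sq_X_sub_C_dvd_of_isLocalMin {p : ℝ[X]} {a : ℝ} (hroot : p.IsRoot a)
    (hmin : IsLocalMin (fun t => p.eval t) a) : (X - C a) ^ 2 ∣ p := by
  rcases eq_or_ne p 0 with rfl | hp
  · exact dvd_zero _
  have hderiv : p.derivative.IsRoot a := by simpa [Polynomial.deriv] using hmin.deriv_eq_zero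
  exact (le_rootMultiplicity_iff hp).1 ((one_lt_rootMultiplicity_iff_isRoot hp).2 ⟨hroot, hderiv⟩)

/-- The factors split off in the induction on the degree. -/
def IsAdmissibleFactor (f : ℝ[X]) (a : ℝ) : Prop :=
  0 < f.natDegree ∧ (∀ t ∈ Icc (-1 : ℝ) 1, t ≠ a → 0 < f.eval t) ∧
    ∀ d q, q ∈ truncPreordering d → f * q ∈ truncPreordering (d + f.natDegree)

theorem exists_isAdmissibleFactor_of_isRoot {p : ℝ[X]}
    (hp : ∀ t ∈ Icc (-1 : ℝ) 1, 0 ≤ p.eval t) {a : ℝ} (ha : p.IsRoot a) :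
    ∃ f u, p = f * u ∧ IsAdmissibleFactor f a := by
  obtain ⟨v, rfl⟩ := dvd_iff_isRoot.2 ha
  have hlin : (X - C a).natDegree ≤ 1 := (natDegree_X_sub_C a).le
  rcases le_or_gt a (-1) with ha_le | ha_gt
  · refine ⟨X - C a, v, rfl, by simp, fun t ht hta => ?_, fun d q hq => ?_⟩
    · simpa using lt_of_le_of_ne (ha_le.trans ht.1) (Ne.symm hta)
    · rw [natDegree_X_sub_C]
      exact truncPreordering.linear_mul_mem hlin (by simp; linarith) (by simp; linarith) hq
  rcases le_or_gt 1 a with ha_ge | ha_lt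
  · refine ⟨-(X - C a), -v, by ring, by rw [natDegree_neg, natDegree_X_sub_C]; norm_num,
      fun t ht hta => ?_, fun d q hq => ?_⟩
    · simpa using lt_of_le_of_ne (ht.2.trans ha_ge) hta
    · rw [natDegree_neg, natDegree_X_sub_C]
      exact truncPreordering.linear_mul_mem (by rwa [natDegree_neg]) (by simp; linarith)
        (by simp; linarith) hq
  -- an interior root is a local minimum, hence a double root
  obtain ⟨u, hu⟩ := sq_X_sub_C_dvd_of_isLocalMin ha <| by
    filter_upwards [Icc_mem_nhds ha_gt ha_lt] with t ht
    simpa [ha.eq_zero] using hp t ht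
  refine ⟨(X - C a) ^ 2, u, hu, by simp, fun t _ hta => ?_, fun d q hq => ?_⟩
  · have := sub_ne_zero.2 hta
    simp only [eval_pow, eval_sub, eval_X, eval_C]
    positivity
  · rw [natDegree_pow, natDegree_X_sub_C]
    exact truncPreordering.sq_mul_mem hlin hq

theorem exists_isAdmissibleFactor_of_forall_not_isRoot {p : ℝ[X]} (hdeg : 0 < p.natDegree)
    (hroot : ∀ a, ¬ p.IsRoot a) : ∃ a f u, p = f * u ∧ IsAdmissibleFactor f a := by
  obtain ⟨z, hz⟩ := IsAlgClosed.exists_aeval_eq_zero ℂ p (natDegree_pos_iff_degree_pos.1 hdeg).ne'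
  have him : z.im ≠ 0 := fun h => hroot z.re <| by
    rw [show z = (z.re : ℂ) from Complex.ext rfl (by simp [h]), ← Complex.coe_algebraMap,
      aeval_algebraMap_apply_eq_algebraMap_eval] at hz
    exact (FaithfulSMul.algebraMap_eq_zero_iff ℝ ℂ).1 hz
  obtain ⟨u, hu⟩ := p.quadratic_dvd_of_aeval_eq_zero_im_ne_zero hz him
  have hquad : X ^ 2 - C (2 * z.re) * X + C (‖z‖ ^ 2) = (X - C z.re) ^ 2 + C (z.im ^ 2) := by
    rw [Complex.sq_norm, Complex.normSq_apply]
    simp only [map_add, map_mul, map_pow, map_ofNat]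
    ring
  have hdeg2 : ((X - C z.re) ^ 2 + C (z.im ^ 2)).natDegree = 2 := by
    rw [natDegree_add_C, natDegree_pow, natDegree_X_sub_C]
  refine ⟨z.re, _, u, hquad ▸ hu, by omega, fun t _ _ => ?_, fun d q hq => ?_⟩
  · simp only [eval_add, eval_pow, eval_sub, eval_X, eval_C]
    positivity
  · rw [hdeg2]
    exact truncPreordering.X_sub_C_sq_add_C_mul_mem (sq_nonneg _) hq

theorem mem_truncPreordering_natDegree_of_nonneg {p : ℝ[X]}
    (hp : ∀ t ∈ Icc (-1 : ℝ) 1, 0 ≤ p.eval t) : p ∈ truncPreordering p.natDegree := by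
  induction hd : p.natDegree using Nat.strong_induction_on generalizing p with
  | _ d IH =>
  rcases Nat.eq_zero_or_pos d with rfl | hd_pos
  · rw [eq_C_of_natDegree_eq_zero hd, coeff_zero_eq_eval_zero]
    exact truncPreordering.C_mem (hp 0 (by norm_num))
  obtain ⟨a, f, u, rfl, hf_deg, hf_pos, hf_mul⟩ : ∃ a f u, p = f * u ∧ IsAdmissibleFactor f a := by
    by_cases hroot : ∃ a, p.IsRoot a
    · obtain ⟨a, ha⟩ := hroot
      exact ⟨a, exists_isAdmissibleFactor_of_isRoot hp ha⟩
    · exact exists_isAdmissibleFactor_of_forall_not_isRoot (hd ▸ hd_pos) (not_exists.1 hroot)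
  have hu : u ≠ 0 := by rintro rfl; simp at hd; omega
  have hdeg : d = u.natDegree + f.natDegree := by
    rw [← hd, natDegree_mul (by rintro rfl; simp at hf_deg) hu, add_comm]
  rw [hdeg]
  exact hf_mul _ _ (IH _ (by omega) (eval_nonneg_of_mul (by norm_num) hp hf_pos) rfl)

theorem lukacs_odd (k : ℕ) (hk : 1 ≤ k) (p : ℝ[X]) (hdeg : p.natDegree ≤ 2 * k - 1) :
    (∀ t ∈ Set.Icc (-1 : ℝ) 1, 0 ≤ p.eval t) ↔
      ∃ q r : ℝ[X], IsSOSOfDegLE (k - 1) q ∧ IsSOSOfDegLE (k - 1) r ∧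
        p = (1 + X) * q + (1 - X) * r := by
  constructor
  · intro hp
    have hk' : 2 * k - 1 = 2 * (k - 1) + 1 := by omega
    exact truncPreordering.exists_eq_of_mem_odd <|
      truncPreordering.mono (mem_truncPreordering_natDegree_of_nonneg hp) (hk' ▸ hdeg)
  · rintro ⟨q, r, hq, hr, rfl⟩ t ht
    simp only [eval_add, eval_mul, eval_sub, eval_one, eval_X]
    exact add_nonneg (mul_nonneg (by linarith [ht.1]) (hq.eval_nonneg t))
      (mul_nonneg (by linarith [ht.2]) (hr.eval_nonneg t))
end

section
/- Let f : [−1,1] → ℝ be continuous with nonnegative (n+1)-st derivative on (−1,1), where n = 2k−1 is odd, and let t₁,…,t_k be the zeros of the Legendre polynomial of degree k. If p is the unique polynomial of degree at most n satisfying p(t_ℓ) = f(t_ℓ) and p′(t_ℓ) = f′(t_ℓ) for ℓ = 1,…,k, then p(t) ≤ f(t) for all t ∈ [−1,1]. -/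
/-! Hermite remainder: if `q` has degree `< 2 #T` and matches `f` and `f'` at the nodes
`T ⊆ (a, b)`, add to `q` the multiple `c w²` of the squared nodal polynomial `w = ∏ (X - y)`
that also matches `f` at a further point `x`. The difference `g` of `f` and this polynomial
vanishes at `x` and at the nodes, and `g'` vanishes at the nodes; Rolle's theorem between
consecutive zeros of `g` gives `#T` more zeros of `g'`, so repeated Rolle gives a point `ξ` where
`g^{(2 #T)} = f^{(2 #T)} - c (2 #T)!` vanishes. Hence `f x - q x = f^{(2 #T)}(ξ) / (2 #T)! · w(x)²`,
which is `≥ 0` when `f^{(2 #T)} ≥ 0`. The zeros of the Legendre polynomial of degree `k` lie in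
`(-1, 1)`: `(X² - 1)^k` vanishes at `±1` to order `k`, so applying Rolle `k` times exhibits `k`
zeros of its `k`-th derivative in `(-1, 1)`, and a polynomial of degree `k` has no others. -/

open Polynomial Set

/-- The Legendre polynomial of degree `k` (Rodrigues' formula). -/
noncomputable def legendrePoly (k : ℕ) : ℝ[X] :=
  Polynomial.C (1 / (2 ^ k * (Nat.factorial k : ℝ))) *
    Polynomial.derivative^[k] ((X ^ 2 - 1) ^ k)

open scoped Finset

theorem Polynomial.iterate_derivative_natDegree {R : Type*} [Semiring R] (p : R[X]) :
    derivative^[p.natDegree] p = C (p.natDegree.factorial * p.leadingCoeff) := by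
  rw [eq_C_of_natDegree_le_zero ((natDegree_iterate_derivative p _).trans (Nat.sub_self _).le),
    coeff_iterate_derivative, zero_add, Nat.descFactorial_self, nsmul_eq_mul, leadingCoeff]

theorem Polynomial.iteratedDeriv_eval {𝕜 : Type*} [NontriviallyNormedField 𝕜] (p : 𝕜[X])
    (n : ℕ) : iteratedDeriv n (fun x => p.eval x) = fun x => (derivative^[n] p).eval x := by
  induction n generalizing p with
  | zero => simp
  | succ n ih =>
    have hderiv : deriv (fun x => p.eval x) = fun x => p.derivative.eval x := by
      ext x
      exact p.deriv
    rw [iteratedDeriv_succ', hderiv, ih, Function.iterate_succ_apply]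

theorem Polynomial.contDiffOn_eval {𝕜 : Type*} [NontriviallyNormedField 𝕜] (p : 𝕜[X])
    {n : WithTop ℕ∞} {s : Set 𝕜} : ContDiffOn 𝕜 n (fun x => p.eval x) s := by
  simpa using (contDiff_aeval (𝕜 := 𝕜) p n).contDiffOn

theorem Polynomial.mem_of_isRoot_of_natDegree_le_card {R : Type*} [CommRing R] [IsDomain R]
    [DecidableEq R] {p : R[X]} (hp : p ≠ 0) {S : Finset R} (hS : ∀ y ∈ S, p.IsRoot y)
    (hcard : p.natDegree ≤ #S) {r : R} (hr : p.IsRoot r) : r ∈ S := by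
  have hsub : S ⊆ p.roots.toFinset := fun y hy => by simpa [hp] using hS y hy
  have hroots : #p.roots.toFinset ≤ #S :=
    (Multiset.toFinset_card_le _).trans ((card_roots' p).trans hcard)
  rw [Finset.eq_of_subset_of_card_le hsub hroots]
  simpa [hp] using hr

theorem DifferentiableOn.hasDerivAt_derivWithin {𝕜 F : Type*} [NontriviallyNormedField 𝕜]
    [NormedAddCommGroup F] [NormedSpace 𝕜 F] {g : 𝕜 → F} {s : Set 𝕜}
    (hg : DifferentiableOn 𝕜 g s) (hs : IsOpen s) {x : 𝕜} (hx : x ∈ s) :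
    HasDerivAt g (derivWithin g s x) x := by
  rw [derivWithin_of_isOpen hs hx]
  exact (hg.differentiableAt (hs.mem_nhds hx)).hasDerivAt

theorem exists_finset_hasDerivAt_eq_zero {s : Set ℝ} (hs : s.OrdConnected) {g g' : ℝ → ℝ}
    (hgc : ContinuousOn g s) (hgd : ∀ x ∈ interior s, HasDerivAt g (g' x) x)
    {S : Finset ℝ} (hSs : ↑S ⊆ s) (hgS : ∀ x ∈ S, g x = 0) :
    ∃ T : Finset ℝ, ↑T ⊆ interior s ∧ (∀ x ∈ T, g' x = 0) ∧ Disjoint S T ∧ #S ≤ #T + 1 := by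
  have rolle : ∀ x ∈ S, ∀ y ∈ S, x < y → ∃ c ∈ Ioo x y, c ∈ interior s ∧ g' c = 0 := by
    intro x hx y hy hxy
    have hIcc : Icc x y ⊆ s := hs.out (hSs hx) (hSs hy)
    have hIoo : Ioo x y ⊆ interior s :=
      interior_maximal (Ioo_subset_Icc_self.trans hIcc) isOpen_Ioo
    obtain ⟨c, hc, hc0⟩ := exists_hasDerivAt_eq_zero hxy (hgc.mono hIcc)
      (by rw [hgS x hx, hgS y hy]) fun z hz => hgd z (hIoo hz)
    exact ⟨c, hc, hIoo hc, hc0⟩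
  choose! c hc using rolle
  set C := ((S ×ˢ S).filter fun q => q.1 < q.2).image fun q => c q.1 q.2
  have hC : ∀ z ∈ C, z ∈ interior s ∧ g' z = 0 := by
    intro z hz
    simp only [C, Finset.mem_image, Finset.mem_filter, Finset.mem_product] at hz
    obtain ⟨⟨x, y⟩, ⟨⟨hx, hy⟩, hxy⟩, rfl⟩ := hz
    exact (hc x hx y hy hxy).2
  refine ⟨C \ S, fun z hz => (hC z (Finset.mem_sdiff.1 hz).1).1,
    fun z hz => (hC z (Finset.mem_sdiff.1 hz).1).2, Finset.disjoint_sdiff,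
    Finset.card_le_sdiff_of_interleaved fun x hx y hy hxy _ =>
      ⟨c x y, ?_, (hc x hx y hy hxy).1⟩⟩
  exact Finset.mem_image.2
    ⟨(x, y), Finset.mem_filter.2 ⟨Finset.mem_product.2 ⟨hx, hy⟩, hxy⟩, rfl⟩

theorem exists_iteratedDerivWithin_eq_zero {s : Set ℝ} (hso : IsOpen s) (hsc : s.OrdConnected)
    {n : ℕ} {g : ℝ → ℝ} (hg : ContDiffOn ℝ n g s) {S : Finset ℝ} (hSs : ↑S ⊆ s)
    (hgS : ∀ x ∈ S, g x = 0) (hcard : n < #S) :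
    ∃ ξ ∈ s, iteratedDerivWithin n g s ξ = 0 := by
  induction n generalizing g S with
  | zero =>
    obtain ⟨ξ, hξ⟩ := Finset.card_pos.1 hcard
    exact ⟨ξ, hSs hξ, by simpa using hgS ξ hξ⟩
  | succ n ih =>
    have hgd : ∀ x ∈ interior s, HasDerivAt g (derivWithin g s x) x := fun x hx =>
      (hg.differentiableOn (by simp)).hasDerivAt_derivWithin hso (hso.interior_eq ▸ hx)
    obtain ⟨T, hTs, hgT, -, hST⟩ :=
      exists_finset_hasDerivAt_eq_zero hsc hg.continuousOn hgd hSs hgS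
    rw [hso.interior_eq] at hTs
    obtain ⟨ξ, hξ, hξ0⟩ := ih (hg.derivWithin hso.uniqueDiffOn (by simp)) hTs hgT (by omega)
    exact ⟨ξ, hξ, by rwa [iteratedDerivWithin_succ']⟩

theorem exists_iteratedDerivWithin_eq_zero_of_hermite_zeros {a b x : ℝ} {g : ℝ → ℝ}
    {T : Finset ℝ} (hgc : ContinuousOn g (Icc a b))
    (hgd : ContDiffOn ℝ (2 * #T : ℕ) g (Ioo a b)) (hT : ↑T ⊆ Ioo a b) (hTne : T.Nonempty)
    (hx : x ∈ Icc a b) (hxT : x ∉ T) (hg : ∀ y ∈ insert x T, g y = 0)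
    (hg' : ∀ y ∈ T, derivWithin g (Ioo a b) y = 0) :
    ∃ ξ ∈ Ioo a b, iteratedDerivWithin (2 * #T) g (Ioo a b) ξ = 0 := by
  obtain ⟨m, hm⟩ : ∃ m, 2 * #T = m + 1 := ⟨2 * #T - 1, by have := hTne.card_pos; omega⟩
  rw [hm] at hgd ⊢
  have hgd' : ∀ y ∈ interior (Icc a b), HasDerivAt g (derivWithin g (Ioo a b) y) y := by
    rw [interior_Icc]
    exact fun y hy => (hgd.differentiableOn (by simp)).hasDerivAt_derivWithin isOpen_Ioo hy
  -- Rolle between consecutive points of `insert x T` supplies `#T` further zeros of `g'`.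
  obtain ⟨T', hT', hg'T', hdisj, hcard⟩ := exists_finset_hasDerivAt_eq_zero ordConnected_Icc
    hgc hgd' (by simpa using insert_subset hx (hT.trans Ioo_subset_Icc_self)) hg
  rw [interior_Icc] at hT'
  rw [Finset.card_insert_of_notMem hxT] at hcard
  have hdisj' : Disjoint T' T := (hdisj.mono_left (Finset.subset_insert x T)).symm
  obtain ⟨ξ, hξ, hξ0⟩ := exists_iteratedDerivWithin_eq_zero isOpen_Ioo ordConnected_Ioo
    (hgd.derivWithin (uniqueDiffOn_Ioo a b) le_rfl) (S := T' ∪ T)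
    (by simpa using union_subset hT' hT) (Finset.forall_mem_union.2 ⟨hg'T', hg'⟩)
    (by rw [Finset.card_union_of_disjoint hdisj']; omega)
  exact ⟨ξ, hξ, by rwa [iteratedDerivWithin_succ']⟩

theorem exists_iteratedDerivWithin_eq_eval_iterate_derivative {a b x : ℝ} {f : ℝ → ℝ}
    {P : ℝ[X]} {T : Finset ℝ} (hfc : ContinuousOn f (Icc a b))
    (hfd : ContDiffOn ℝ (2 * #T : ℕ) f (Ioo a b)) (hT : ↑T ⊆ Ioo a b) (hTne : T.Nonempty)
    (hx : x ∈ Icc a b) (hxT : x ∉ T) (hval : ∀ y ∈ insert x T, P.eval y = f y)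
    (hder : ∀ y ∈ T, P.derivative.eval y = derivWithin f (Ioo a b) y) :
    ∃ ξ ∈ Ioo a b,
      iteratedDerivWithin (2 * #T) f (Ioo a b) ξ = (derivative^[2 * #T] P).eval ξ := by
  have hfdiff : DifferentiableOn ℝ f (Ioo a b) :=
    hfd.differentiableOn (by have := hTne.card_pos; norm_cast; omega)
  have hg' : ∀ y ∈ T, derivWithin (f - fun y => P.eval y) (Ioo a b) y = 0 := by
    intro y hy
    have hderiv := (hfdiff.hasDerivAt_derivWithin isOpen_Ioo (hT hy)).sub (P.hasDerivAt y)
    rw [hderiv.hasDerivWithinAt.derivWithin (isOpen_Ioo.uniqueDiffWithinAt (hT hy)),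
      hder y hy, sub_self]
  obtain ⟨ξ, hξ, hξ0⟩ := exists_iteratedDerivWithin_eq_zero_of_hermite_zeros
    (hfc.sub P.continuous.continuousOn) (hfd.sub P.contDiffOn_eval) hT hTne hx hxT
    (fun y hy => by simp [hval y hy]) hg'
  rw [iteratedDerivWithin_sub hξ (uniqueDiffOn_Ioo a b) (hfd ξ hξ) (P.contDiffOn_eval ξ hξ),
    iteratedDerivWithin_of_isOpen (f := fun y => P.eval y) isOpen_Ioo hξ, P.iteratedDeriv_eval,
    sub_eq_zero] at hξ0
  exact ⟨ξ, hξ, hξ0⟩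

theorem hermite_mean_remainder {a b x : ℝ} {f : ℝ → ℝ} {q : ℝ[X]} {T : Finset ℝ}
    (hfc : ContinuousOn f (Icc a b)) (hfd : ContDiffOn ℝ (2 * #T : ℕ) f (Ioo a b))
    (hT : ↑T ⊆ Ioo a b) (hq : q.natDegree < 2 * #T) (hval : ∀ y ∈ T, q.eval y = f y)
    (hder : ∀ y ∈ T, q.derivative.eval y = derivWithin f (Ioo a b) y) (hx : x ∈ Icc a b) :
    ∃ ξ ∈ Ioo a b, f x - q.eval x =
      iteratedDerivWithin (2 * #T) f (Ioo a b) ξ / (2 * #T).factorial *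
        (∏ y ∈ T, (x - y)) ^ 2 := by
  by_cases hxT : x ∈ T
  · exact ⟨x, hT hxT, by rw [hval x hxT, Finset.prod_eq_zero hxT (sub_self x)]; simp⟩
  set w : ℝ[X] := ∏ y ∈ T, (X - C y)
  have hw_eval : ∀ z, w.eval z = ∏ y ∈ T, (z - y) := fun z => by simp [w, eval_prod]
  have hwT : ∀ y ∈ T, w.eval y = 0 := fun y hy => by
    rw [hw_eval]
    exact Finset.prod_eq_zero hy (sub_self y)
  have hwx : w.eval x ≠ 0 := by
    rw [hw_eval]
    exact Finset.prod_ne_zero_iff.2 fun y hy => sub_ne_zero.2 fun h => hxT (h ▸ hy)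
  have hw : w.Monic := monic_prod_of_monic _ _ fun y _ => monic_X_sub_C y
  have hw2 : (w ^ 2).natDegree = 2 * #T := by
    rw [hw.natDegree_pow, natDegree_finsetProd_X_sub_C_eq_card, mul_comm]
  set c := (f x - q.eval x) / w.eval x ^ 2
  set P := q + C c * w ^ 2
  have hPval : ∀ y ∈ insert x T, P.eval y = f y := by
    refine Finset.forall_mem_insert _ _ _ |>.2 ⟨?_, fun y hy => ?_⟩
    · simp [P, c, div_mul_cancel₀ _ (pow_ne_zero 2 hwx)]
    · simp [P, hwT y hy, hval y hy]
  have hPder : ∀ y ∈ T, P.derivative.eval y = derivWithin f (Ioo a b) y := fun y hy => by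
    simp [P, derivative_pow, hwT y hy, hder y hy]
  have hPtop : derivative^[2 * #T] P = C (c * (2 * #T).factorial) := by
    rw [iterate_map_add, iterate_derivative_eq_zero hq, zero_add, iterate_derivative_C_mul,
      ← hw2, iterate_derivative_natDegree, hw2, (hw.pow 2).leadingCoeff, mul_one, ← C_mul]
  obtain ⟨ξ, hξ, hξP⟩ := exists_iteratedDerivWithin_eq_eval_iterate_derivative hfc hfd hT
    (Finset.card_pos.1 (by omega)) hx hxT hPval hPder
  refine ⟨ξ, hξ, ?_⟩
  rw [hξP, hPtop, eval_C, ← hw_eval, mul_div_cancel_right₀ _ (by positivity),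
    div_mul_cancel₀ _ (pow_ne_zero 2 hwx)]

theorem Polynomial.monic_X_sq_sub_one {R : Type*} [Ring R] : ((X : R[X]) ^ 2 - 1).Monic :=
  monic_X_pow_sub_C 1 two_ne_zero

theorem Polynomial.natDegree_X_sq_sub_one_pow {R : Type*} [Ring R] [Nontrivial R] (k : ℕ) :
    (((X : R[X]) ^ 2 - 1) ^ k).natDegree = 2 * k := by
  rw [monic_X_sq_sub_one.natDegree_pow, ← C_1, natDegree_X_pow_sub_C, mul_comm]

theorem exists_roots_iterate_derivative_X_sq_sub_one_pow {j k : ℕ} (hj : j ≤ k) :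
    ∃ S : Finset ℝ, ↑S ⊆ Ioo (-1 : ℝ) 1 ∧ j ≤ #S ∧
      ∀ y ∈ S, (derivative^[j] (((X : ℝ[X]) ^ 2 - 1) ^ k)).IsRoot y := by
  induction j with
  | zero => exact ⟨∅, by simp, le_rfl, by simp⟩
  | succ j ih =>
    obtain ⟨S, hS, hjS, hroots⟩ := ih (by omega)
    set D := derivative^[j] (((X : ℝ[X]) ^ 2 - 1) ^ k)
    -- `(X ^ 2 - 1) ^ (k - j)` divides `D` and `k - j ≠ 0`.
    have hD_pm_one : ∀ e : ℝ, e ^ 2 = 1 → D.eval e = 0 := fun e he => by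
      obtain ⟨r, hr⟩ := pow_sub_dvd_iterate_derivative_pow ((X : ℝ[X]) ^ 2 - 1) k j
      simp [D, hr, he, zero_pow (show k - j ≠ 0 by omega)]
    have h1 : (1 : ℝ) ∉ S := fun h => (hS h).2.false
    have hm1 : (-1 : ℝ) ∉ insert 1 S := by
      rw [Finset.mem_insert, not_or]
      exact ⟨by norm_num, fun h => (hS h).1.false⟩
    obtain ⟨T, hT, hDT, -, hcard⟩ := exists_finset_hasDerivAt_eq_zero ordConnected_Icc
      D.continuous.continuousOn (fun y _ => D.hasDerivAt y) (S := insert (-1) (insert 1 S))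
      (by simpa using insert_subset (by norm_num) (insert_subset (by norm_num)
        (hS.trans Ioo_subset_Icc_self)))
      (by simpa [Finset.forall_mem_insert] using
        ⟨hD_pm_one _ (by norm_num), hD_pm_one _ (by norm_num), hroots⟩)
    rw [interior_Icc] at hT
    rw [Finset.card_insert_of_notMem hm1, Finset.card_insert_of_notMem h1] at hcard
    refine ⟨T, hT, by omega, fun y hy => ?_⟩
    rw [Function.iterate_succ_apply']
    exact hDT y hy

theorem mem_Ioo_of_legendrePoly_eval_eq_zero {k : ℕ} {r : ℝ}
    (hr : (legendrePoly k).eval r = 0) : r ∈ Ioo (-1 : ℝ) 1 := by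
  set D := derivative^[k] (((X : ℝ[X]) ^ 2 - 1) ^ k)
  have hD : D.coeff k ≠ 0 := by
    rw [coeff_iterate_derivative, ← two_mul, ← natDegree_X_sq_sub_one_pow (R := ℝ) k,
      (monic_X_sq_sub_one.pow k).coeff_natDegree, nsmul_one, natDegree_X_sq_sub_one_pow,
      Nat.cast_ne_zero, Ne, Nat.descFactorial_eq_zero_iff_lt]
    omega
  have hD0 : D ≠ 0 := fun h => by rw [h, coeff_zero] at hD; exact hD rfl
  have hDdeg : D.natDegree ≤ k :=
    (natDegree_iterate_derivative _ _).trans (by rw [natDegree_X_sq_sub_one_pow]; omega)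
  have hDr : D.IsRoot r := by simpa [legendrePoly, D, Nat.factorial_ne_zero] using hr
  obtain ⟨S, hS, hkS, hroots⟩ := exists_roots_iterate_derivative_X_sq_sub_one_pow (le_refl k)
  exact hS (mem_of_isRoot_of_natDegree_le_card hD0 hroots (hDdeg.trans hkS) hDr)

theorem hermite_interpolant_at_legendre_zeros_le (k : ℕ) (hk : 1 ≤ k)
    (f : ℝ → ℝ)
    (hfc : ContinuousOn f (Set.Icc (-1 : ℝ) 1))
    (hfd : ContDiffOn ℝ (2 * k - 1 + 1 : ℕ) f (Set.Ioo (-1 : ℝ) 1))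
    (hfpos : ∀ x ∈ Set.Ioo (-1 : ℝ) 1,
      0 ≤ iteratedDerivWithin (2 * k - 1 + 1) f (Set.Ioo (-1 : ℝ) 1) x)
    (t : Fin k → ℝ) (ht : Function.Injective t)
    (htroot : ∀ ℓ, (legendrePoly k).eval (t ℓ) = 0)
    (p : ℝ[X]) (hpdeg : p.natDegree ≤ 2 * k - 1)
    (hval : ∀ ℓ, p.eval (t ℓ) = f (t ℓ))
    (hder : ∀ ℓ, (Polynomial.derivative p).eval (t ℓ) = derivWithin f (Set.Ioo (-1 : ℝ) 1) (t ℓ)) :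
    ∀ x ∈ Set.Icc (-1 : ℝ) 1, p.eval x ≤ f x := by
  intro x hx
  set T := Finset.univ.image t
  have hTcard : #T = k := by
    rw [Finset.card_image_of_injective _ ht, Finset.card_univ, Fintype.card_fin]
  rw [show 2 * k - 1 + 1 = 2 * #T by omega] at hfd hfpos
  obtain ⟨ξ, hξ, hrem⟩ := hermite_mean_remainder (q := p) hfc hfd
    (by simpa [T, subset_def] using fun ℓ => mem_Ioo_of_legendrePoly_eval_eq_zero (htroot ℓ))
    (by omega) (by simpa [T] using hval) (by simpa [T] using hder) hx
  have hξpos := hfpos ξ hξ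
  have hrem_nonneg : 0 ≤ f x - p.eval x := by
    rw [hrem]
    positivity
  linarith
end
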